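/- arXiv:1410.7558 — 2 statements merged into one kernel-verified Lean document; each statement's English description precedes it below -/
import Mathlib

section
/- Let Ā ≥ 0 and Ē ≥ 0 be such that ‖A(t)‖ ≤ Ā and ‖E(t)‖ ≤ Ē for all t ∈ [0,T]. Then for every t ∈ [0,T]: ‖h(t)‖ ≤ √T · d² · ‖C‖ · e^{√d (Ā + Ē/λ) T} · (∫₀ᵀ ‖Y(s)‖² ds)^{1/2} + √(dT) · Ē · e^{√d (Ā + Ē/λ) T} · (∫₀ᵀ ‖r(s)‖² ds)^{1/2}. -/
/-!
Along the solution, `‖h'‖ ≤ (Ā + Ē/λ) ‖h‖ + ‖C‖ ‖Y‖ + Ē ‖r‖`. Since `h(0) = 0`, Gronwall's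
inequality gives `‖h(t)‖ ≤ e^{(Ā + Ē/λ) t} ∫₀ᵗ (‖C‖ ‖Y‖ + Ē ‖r‖)`, and by Cauchy–Schwarz
`∫₀ᵀ ‖Y‖ ≤ √T (∫₀ᵀ ‖Y‖²)^{1/2}`, likewise for `r`. The factors `d²`, `√d` and `√(dT)` only
weaken this, as `d ≥ 1`.
-/

open Matrix Set intervalIntegral
open scoped Matrix

noncomputable section

/-- Frobenius norm of a real matrix. -/
def frob {m n : Type*} [Fintype m] [Fintype n] (M : Matrix m n ℝ) : ℝ :=
  Real.sqrt (∑ i, ∑ j, (M i j) ^ 2)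

/-- Euclidean norm of a real vector. -/
def evnorm {n : Type*} [Fintype n] (v : n → ℝ) : ℝ :=
  Real.sqrt (∑ i, (v i) ^ 2)

open Real

section Norms

variable {m n : Type*} [Fintype m] [Fintype n]

attribute [local instance] Matrix.frobeniusNormedAddCommGroup Matrix.frobeniusNormedSpace

lemma evnorm_eq_norm (v : n → ℝ) : evnorm v = ‖WithLp.toLp 2 v‖ := by
  simp [evnorm, EuclideanSpace.norm_eq, Real.norm_eq_abs, sq_abs]

lemma frob_eq_norm (M : Matrix m n ℝ) : frob M = ‖M‖ := by
  simp [frob, Matrix.frobenius_norm_def, Real.sqrt_eq_rpow, Real.norm_eq_abs]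

lemma evnorm_nonneg (v : n → ℝ) : 0 ≤ evnorm v := Real.sqrt_nonneg _

lemma frob_nonneg (M : Matrix m n ℝ) : 0 ≤ frob M := Real.sqrt_nonneg _

lemma evnorm_mulVec_le (M : Matrix m n ℝ) (v : n → ℝ) :
    evnorm (M *ᵥ v) ≤ frob M * evnorm v := by
  simp only [evnorm_eq_norm, frob_eq_norm]
  rw [← Matrix.frobenius_norm_replicateCol (ι := Unit),
    ← Matrix.frobenius_norm_replicateCol (ι := Unit), Matrix.replicateCol_mulVec]
  exact Matrix.frobenius_norm_mul _ _

lemma evnorm_adjoint_rhs_le (C : Matrix m n ℝ) {A E : Matrix n n ℝ} {lam Abar Ebar : ℝ}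
    (hlam : 0 < lam) (hA : frob A ≤ Abar) (hE : frob E ≤ Ebar)
    (x r : n → ℝ) (y : m → ℝ) :
    evnorm (-((Aᵀ + (1 / lam) • E) *ᵥ x) - (Cᵀ *ᵥ y + E *ᵥ r))
      ≤ (Abar + Ebar / lam) * evnorm x + (frob C * evnorm y + Ebar * evnorm r) := by
  have hB : frob (Aᵀ + (1 / lam) • E) ≤ Abar + Ebar / lam := by
    simp only [frob_eq_norm] at hA hE ⊢
    calc ‖Aᵀ + (1 / lam) • E‖ ≤ ‖Aᵀ‖ + ‖(1 / lam) • E‖ := norm_add_le _ _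
      _ = ‖A‖ + ‖E‖ / lam := by
        rw [Matrix.frobenius_norm_transpose, norm_smul, Real.norm_of_nonneg (by positivity)]
        ring
      _ ≤ Abar + Ebar / lam := by gcongr
  have hCt : frob Cᵀ = frob C := by
    rw [frob_eq_norm, frob_eq_norm, Matrix.frobenius_norm_transpose]
  have := evnorm_nonneg x
  have := evnorm_nonneg r
  calc evnorm (-((Aᵀ + (1 / lam) • E) *ᵥ x) - (Cᵀ *ᵥ y + E *ᵥ r))
      ≤ evnorm ((Aᵀ + (1 / lam) • E) *ᵥ x) + (evnorm (Cᵀ *ᵥ y) + evnorm (E *ᵥ r)) := by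
        simp only [evnorm_eq_norm, WithLp.toLp_sub, WithLp.toLp_neg, WithLp.toLp_add]
        exact (norm_sub_le _ _).trans (by rw [norm_neg]; gcongr; exact norm_add_le _ _)
    _ ≤ frob (Aᵀ + (1 / lam) • E) * evnorm x + (frob Cᵀ * evnorm y + frob E * evnorm r) := by
        gcongr <;> exact evnorm_mulVec_le _ _
    _ ≤ (Abar + Ebar / lam) * evnorm x + (frob C * evnorm y + Ebar * evnorm r) := by
        rw [hCt]
        gcongr

lemma continuousOn_evnorm {f : ℝ → n → ℝ} {s : Set ℝ}
    (hf : ∀ i, ContinuousOn (fun t => f t i) s) : ContinuousOn (fun t => evnorm (f t)) s := by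
  unfold evnorm
  fun_prop

end Norms

lemma hasDerivAt_toLp {ι : Type*} [Fintype ι] {f : ℝ → ι → ℝ} {f' : ι → ℝ} {t : ℝ}
    (hf : ∀ i, HasDerivAt (fun s => f s i) (f' i) t) :
    HasDerivAt (fun s => WithLp.toLp 2 (f s)) (WithLp.toLp 2 f') t :=
  (PiLp.continuousLinearEquiv 2 ℝ (fun _ : ι => ℝ)).symm.hasFDerivAt.comp_hasDerivAt t
    (hasDerivAt_pi.2 hf)

section Primitive

variable {E : Type*} [NormedAddCommGroup E] [NormedSpace ℝ E] {f : ℝ → E} {a b : ℝ}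

lemma continuousOn_primitive_Icc (hf : ContinuousOn f (Icc a b)) :
    ContinuousOn (fun t => ∫ s in a..t, f s) (Icc a b) := by
  rcases le_or_gt a b with hab | hba
  · rw [← uIcc_of_le hab] at hf ⊢
    exact continuousOn_primitive_interval hf.integrableOn_Icc
  · simp [Icc_eq_empty_of_lt hba]

lemma hasDerivWithinAt_primitive_Ici [CompleteSpace E] (hf : ContinuousOn f (Icc a b)) {x : ℝ}
    (hx : x ∈ Ico a b) : HasDerivWithinAt (fun t => ∫ s in a..t, f s) (f x) (Ici x) x := by
  have : Fact (x ∈ Icc a b) := ⟨Ico_subset_Icc_self hx⟩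
  have hderiv : HasDerivWithinAt (fun t => ∫ s in a..t, f s) (f x) (Icc a b) x :=
    integral_hasDerivWithinAt_right
      ((hf.mono (Icc_subset_Icc_right hx.2.le)).intervalIntegrable_of_Icc hx.1)
      (hf.stronglyMeasurableAtFilter_nhdsWithin measurableSet_Icc x) (hf x this.out)
  exact hderiv.mono_of_mem_nhdsWithin
    (Filter.mem_of_superset (Icc_mem_nhdsGE hx.2) (Icc_subset_Icc_left hx.1))

end Primitive

theorem le_exp_mul_integral_of_le_integral {φ f : ℝ → ℝ} {a b M : ℝ} (hM : 0 ≤ M)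
    (hφ : ContinuousOn φ (Icc a b)) (hf : ContinuousOn f (Icc a b))
    (hf0 : ∀ s ∈ Icc a b, 0 ≤ f s)
    (hle : ∀ t ∈ Icc a b, φ t ≤ ∫ s in a..t, (M * φ s + f s)) :
    ∀ t ∈ Icc a b, φ t ≤ exp (M * (t - a)) * ∫ s in a..t, f s := by
  set v : ℝ → ℝ := fun t => ∫ s in a..t, (M * φ s + f s)
  have hv : ContinuousOn (fun s => M * φ s + f s) (Icc a b) := by fun_prop
  -- `(e^{-M(t-a)} v)' = e^{-M(t-a)} (f + M (φ - v)) ≤ f`, since `φ ≤ v`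
  have hw : ∀ t ∈ Icc a b, exp (-(M * (t - a))) * v t ≤ ∫ s in a..t, f s := by
    refine image_le_of_deriv_right_le_deriv_boundary
      (f' := fun x => exp (-(M * (x - a))) * (M * φ x + f x) - M * exp (-(M * (x - a))) * v x)
      ?_ (fun x hx => ?_) (by simp [v]) (continuousOn_primitive_Icc hf)
      (fun x hx => hasDerivWithinAt_primitive_Ici hf hx) (fun x hx => ?_)
    · exact (by fun_prop : Continuous fun t => exp (-(M * (t - a)))).continuousOn.mul
        (continuousOn_primitive_Icc hv)
    · have hexp : HasDerivWithinAt (fun t => exp (-(M * (t - a))))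
          (-M * exp (-(M * (x - a)))) (Ici x) x := by
        simpa [mul_comm] using
          (((hasDerivAt_id x).sub_const a).const_mul M).neg.exp.hasDerivWithinAt
      exact (hexp.mul (hasDerivWithinAt_primitive_Ici hv hx)).congr_deriv (by ring)
    · have hx' := Ico_subset_Icc_self hx
      have hexp_le : exp (-(M * (x - a))) ≤ 1 :=
        exp_le_one_iff.2 (neg_nonpos.2 (mul_nonneg hM (sub_nonneg.2 hx.1)))
      calc exp (-(M * (x - a))) * (M * φ x + f x) - M * exp (-(M * (x - a))) * v x
          = exp (-(M * (x - a))) * f x + exp (-(M * (x - a))) * (M * (φ x - v x)) := by ring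
        _ ≤ 1 * f x + 0 := add_le_add (mul_le_mul_of_nonneg_right hexp_le (hf0 x hx'))
          (mul_nonpos_of_nonneg_of_nonpos (exp_pos _).le
            (mul_nonpos_of_nonneg_of_nonpos hM (sub_nonpos.2 (hle x hx'))))
        _ = f x := by ring
  intro t ht
  calc φ t ≤ v t := hle t ht
    _ = exp (M * (t - a)) * (exp (-(M * (t - a))) * v t) := by
        rw [← mul_assoc, ← exp_add, add_neg_cancel, exp_zero, one_mul]
    _ ≤ exp (M * (t - a)) * ∫ s in a..t, f s := by gcongr; exact hw t ht

/-- `‖H‖` need not be differentiable, so it is first compared with the primitive of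
`M ‖H‖ + g` and then the integral form of Gronwall's inequality applies. -/
theorem norm_le_exp_mul_integral_of_norm_deriv_le {E : Type*} [NormedAddCommGroup E]
    [NormedSpace ℝ E] {H H' : ℝ → E} {g : ℝ → ℝ} {a b M : ℝ} (hM : 0 ≤ M)
    (hH : ∀ t ∈ Icc a b, HasDerivAt H (H' t) t) (ha : H a = 0)
    (hg : ContinuousOn g (Icc a b)) (hg0 : ∀ t ∈ Icc a b, 0 ≤ g t)
    (bound : ∀ t ∈ Icc a b, ‖H' t‖ ≤ M * ‖H t‖ + g t) :
    ∀ t ∈ Icc a b, ‖H t‖ ≤ exp (M * (t - a)) * ∫ s in a..t, g s := by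
  have hHc : ContinuousOn H (Icc a b) := fun t ht => (hH t ht).continuousAt.continuousWithinAt
  have hrhs : ContinuousOn (fun s => M * ‖H s‖ + g s) (Icc a b) := by fun_prop
  refine le_exp_mul_integral_of_le_integral hM hHc.norm hg hg0 ?_
  exact image_norm_le_of_norm_deriv_right_le_deriv_boundary' hHc
    (fun x hx => (hH x (Ico_subset_Icc_self hx)).hasDerivWithinAt) (by simp [ha])
    (continuousOn_primitive_Icc hrhs) (fun x hx => hasDerivWithinAt_primitive_Ici hrhs hx)
    (fun x hx => bound x (Ico_subset_Icc_self hx))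

theorem sq_integral_le_mul_integral_sq {g : ℝ → ℝ} {a b : ℝ} (hab : a ≤ b)
    (hg : IntervalIntegrable g MeasureTheory.volume a b)
    (hg2 : IntervalIntegrable (fun x => g x ^ 2) MeasureTheory.volume a b) :
    (∫ x in a..b, g x) ^ 2 ≤ (b - a) * ∫ x in a..b, g x ^ 2 := by
  rcases hab.eq_or_lt with rfl | hlt
  · simp
  set I := ∫ x in a..b, g x
  set c := I / (b - a)
  -- integrate `2 c g ≤ c² + g²` for the optimal constant `c`
  have hint : ∫ x in a..b, 2 * c * g x ≤ ∫ x in a..b, (c ^ 2 + g x ^ 2) :=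
    integral_mono_on hab (hg.const_mul _) (intervalIntegrable_const.add hg2)
      fun x _ => by nlinarith [sq_nonneg (c - g x)]
  rw [integral_const_mul, integral_add intervalIntegrable_const hg2, integral_const,
    smul_eq_mul] at hint
  have hba : 0 < b - a := sub_pos.2 hlt
  have e1 : 2 * c * I = 2 * (I ^ 2 / (b - a)) := by ring
  have e2 : (b - a) * c ^ 2 = I ^ 2 / (b - a) := by simp only [c]; field_simp
  rw [← div_le_iff₀' hba]
  linarith

theorem integral_le_sqrt_mul_sqrt_integral_sq_of_mem_Icc {u : ℝ → ℝ} {a b t : ℝ}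
    (hu : ContinuousOn u (Icc a b)) (hu0 : ∀ s ∈ Icc a b, 0 ≤ u s) (ht : t ∈ Icc a b) :
    ∫ s in a..t, u s ≤ √(b - a) * √(∫ s in a..b, u s ^ 2) := by
  have hab : a ≤ b := ht.1.trans ht.2
  have hsq := sq_integral_le_mul_integral_sq hab (hu.intervalIntegrable_of_Icc hab)
    ((hu.pow 2).intervalIntegrable_of_Icc hab)
  calc ∫ s in a..t, u s ≤ ∫ s in a..b, u s :=
        integral_mono_interval le_rfl ht.1 ht.2
          (MeasureTheory.ae_restrict_of_forall_mem measurableSet_Ioc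
            fun s hs => hu0 s (Ioc_subset_Icc_self hs))
          (hu.intervalIntegrable_of_Icc hab)
    _ ≤ √(b - a) * √(∫ s in a..b, u s ^ 2) := by
        rw [← sqrt_mul (sub_nonneg.2 hab)]
        exact (le_abs_self _).trans (abs_le_sqrt hsq)

theorem integral_linear_combination_le_sqrt_mul {u v : ℝ → ℝ} {a b t c e : ℝ}
    (hu : ContinuousOn u (Icc a b)) (hv : ContinuousOn v (Icc a b))
    (hu0 : ∀ s ∈ Icc a b, 0 ≤ u s) (hv0 : ∀ s ∈ Icc a b, 0 ≤ v s) (hc : 0 ≤ c) (he : 0 ≤ e)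
    (ht : t ∈ Icc a b) :
    ∫ s in a..t, (c * u s + e * v s)
      ≤ √(b - a) * (c * √(∫ s in a..b, u s ^ 2) + e * √(∫ s in a..b, v s ^ 2)) := by
  have hsub : Icc a t ⊆ Icc a b := Icc_subset_Icc_right ht.2
  calc ∫ s in a..t, (c * u s + e * v s)
      = c * (∫ s in a..t, u s) + e * ∫ s in a..t, v s := by
        rw [integral_add (((hu.mono hsub).intervalIntegrable_of_Icc ht.1).const_mul _)
          (((hv.mono hsub).intervalIntegrable_of_Icc ht.1).const_mul _),
          integral_const_mul, integral_const_mul]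
    _ ≤ c * (√(b - a) * √(∫ s in a..b, u s ^ 2))
          + e * (√(b - a) * √(∫ s in a..b, v s ^ 2)) := by
        gcongr
        · exact integral_le_sqrt_mul_sqrt_integral_sq_of_mem_Icc hu hu0 ht
        · exact integral_le_sqrt_mul_sqrt_integral_sq_of_mem_Icc hv hv0 ht
    _ = _ := by ring

theorem evnorm_adjoint_le {m n : Type*} [Fintype m] [Fintype n] {T lam Abar Ebar : ℝ}
    (hlam : 0 < lam) (hAbar : 0 ≤ Abar) (hEbar : 0 ≤ Ebar) {C : Matrix m n ℝ}
    {A E : ℝ → Matrix n n ℝ} {r h : ℝ → n → ℝ} {Y : ℝ → m → ℝ}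
    (hr : ∀ i, ContinuousOn (fun t => r t i) (Icc 0 T))
    (hY : ∀ i, ContinuousOn (fun t => Y t i) (Icc 0 T)) (hh0 : h 0 = 0)
    (hh : ∀ t ∈ Icc (0:ℝ) T, ∀ i, HasDerivAt (fun s => h s i)
      ((-(((A t)ᵀ + (1 / lam) • E t) *ᵥ h t) - (Cᵀ *ᵥ Y t + E t *ᵥ r t)) i) t)
    (hAb : ∀ t ∈ Icc (0:ℝ) T, frob (A t) ≤ Abar)
    (hEb : ∀ t ∈ Icc (0:ℝ) T, frob (E t) ≤ Ebar) :
    ∀ t ∈ Icc (0:ℝ) T, evnorm (h t) ≤ exp ((Abar + Ebar / lam) * t) * (√T *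
      (frob C * √(∫ s in 0..T, evnorm (Y s) ^ 2) + Ebar * √(∫ s in 0..T, evnorm (r s) ^ 2))) := by
  intro t ht
  have hYc := continuousOn_evnorm hY
  have hrc := continuousOn_evnorm hr
  have hC := frob_nonneg C
  have hforcing := integral_linear_combination_le_sqrt_mul hYc hrc (fun s _ => evnorm_nonneg _)
    (fun s _ => evnorm_nonneg _) hC hEbar ht
  rw [sub_zero] at hforcing
  have hg0 : ∀ s ∈ Icc 0 T, 0 ≤ frob C * evnorm (Y s) + Ebar * evnorm (r s) := fun s _ =>
    add_nonneg (mul_nonneg hC (evnorm_nonneg _)) (mul_nonneg hEbar (evnorm_nonneg _))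
  have hgronwall := norm_le_exp_mul_integral_of_norm_deriv_le (M := Abar + Ebar / lam)
    (by positivity) (fun s hs => hasDerivAt_toLp (hh s hs)) (by simp [hh0]) (by fun_prop) hg0
    (fun s hs => by simpa only [← evnorm_eq_norm] using
      evnorm_adjoint_rhs_le C hlam (hAb s hs) (hEb s hs) (h s) (r s) (Y s)) t ht
  rw [← evnorm_eq_norm, sub_zero] at hgronwall
  have hint0 : 0 ≤ ∫ s in 0..t, (frob C * evnorm (Y s) + Ebar * evnorm (r s)) :=
    integral_nonneg ht.1 fun s hs => hg0 s ⟨hs.1, hs.2.trans ht.2⟩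
  exact hgronwall.trans (by gcongr)

theorem statement9_general
    (d d' : ℕ) (hd : 1 ≤ d) (T : ℝ) (hT : 0 < T) (lam : ℝ) (hlam : 0 < lam)
    (C : Matrix (Fin d') (Fin d) ℝ)
    (A : ℝ → Matrix (Fin d) (Fin d) ℝ)
    (r : ℝ → Fin d → ℝ) (Y : ℝ → Fin d' → ℝ)
    (hr : ∀ i, ContinuousOn (fun t => r t i) (Icc 0 T))
    (hY : ∀ i, ContinuousOn (fun t => Y t i) (Icc 0 T))
    (E : ℝ → Matrix (Fin d) (Fin d) ℝ)
    (h : ℝ → Fin d → ℝ)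
    (hh0 : h 0 = 0)
    (hh : ∀ t ∈ Icc (0:ℝ) T, ∀ i,
      HasDerivAt (fun s => h s i)
        ((-(((A t)ᵀ + (1 / lam) • E t).mulVec (h t))
          - (Cᵀ.mulVec (Y t) + (E t).mulVec (r t))) i) t)
    (Abar Ebar : ℝ) (hAbar : 0 ≤ Abar) (hEbar : 0 ≤ Ebar)
    (hAb : ∀ t ∈ Icc (0:ℝ) T, frob (A t) ≤ Abar)
    (hEb : ∀ t ∈ Icc (0:ℝ) T, frob (E t) ≤ Ebar) :
    ∀ t ∈ Icc (0:ℝ) T,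
      evnorm (h t) ≤
        Real.sqrt T * (d : ℝ) ^ 2 * frob C *
            Real.exp (Real.sqrt d * (Abar + Ebar / lam) * T) *
            Real.sqrt (∫ s in (0:ℝ)..T, evnorm (Y s) ^ 2)
        + Real.sqrt (d * T) * Ebar *
            Real.exp (Real.sqrt d * (Abar + Ebar / lam) * T) *
            Real.sqrt (∫ s in (0:ℝ)..T, evnorm (r s) ^ 2) := by
  intro t ht
  have hsharp := evnorm_adjoint_le hlam hAbar hEbar hr hY hh0 hh hAb hEb t ht
  set M := Abar + Ebar / lam
  have hM : 0 ≤ M := by positivity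
  have hC := frob_nonneg C
  have hd1 : (1 : ℝ) ≤ d := by exact_mod_cast hd
  have hrate : M * t ≤ √d * M * T := by
    rw [mul_assoc]
    exact (mul_le_mul_of_nonneg_left ht.2 hM).trans
      (le_mul_of_one_le_left (by positivity) (one_le_sqrt.2 hd1))
  have hsqrtT : √T ≤ √(d * T) := sqrt_le_sqrt (le_mul_of_one_le_left hT.le hd1)
  have hd2 : √T ≤ √T * (d : ℝ) ^ 2 := le_mul_of_one_le_right (sqrt_nonneg _) (one_le_pow₀ hd1)
  calc evnorm (h t)
      ≤ exp (M * t) * (√T * frob C * √(∫ s in 0..T, evnorm (Y s) ^ 2)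
          + √T * Ebar * √(∫ s in 0..T, evnorm (r s) ^ 2)) := hsharp.trans_eq (by ring)
    _ ≤ exp (√d * M * T) * (√T * d ^ 2 * frob C * √(∫ s in 0..T, evnorm (Y s) ^ 2)
          + √(d * T) * Ebar * √(∫ s in 0..T, evnorm (r s) ^ 2)) := by gcongr
    _ = _ := by ring

/-- a priori bound on the adjoint variable `h`:
`‖h(t)‖ ≤ √T d² ‖C‖ e^{√d(Ā+Ē/λ)T} (∫₀ᵀ‖Y‖²)^{1/2} + √(dT) Ē e^{√d(Ā+Ē/λ)T} (∫₀ᵀ‖r‖²)^{1/2}`. -/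
theorem statement9
    (d d' : ℕ) (hd : 1 ≤ d) (hd' : 1 ≤ d') (T : ℝ) (hT : 0 < T) (lam : ℝ) (hlam : 0 < lam)
    (C : Matrix (Fin d') (Fin d) ℝ)
    (A : ℝ → Matrix (Fin d) (Fin d) ℝ)
    (r : ℝ → Fin d → ℝ) (Y : ℝ → Fin d' → ℝ)
    (hA : ∀ i j, ContinuousOn (fun t => A t i j) (Icc 0 T))
    (hr : ∀ i, ContinuousOn (fun t => r t i) (Icc 0 T))
    (hY : ∀ i, ContinuousOn (fun t => Y t i) (Icc 0 T))
    (Q : Matrix (Fin d) (Fin d) ℝ) (hQ : Q.PosSemidef)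
    (E : ℝ → Matrix (Fin d) (Fin d) ℝ)
    (hE0 : E 0 = Q)
    (hE : ∀ t ∈ Icc (0:ℝ) T, ∀ i j,
      HasDerivAt (fun s => E s i j)
        ((Cᵀ * C - (A t)ᵀ * E t - E t * A t - (1 / lam) • (E t * E t)) i j) t)
    (h : ℝ → Fin d → ℝ)
    (hh0 : h 0 = 0)
    (hh : ∀ t ∈ Icc (0:ℝ) T, ∀ i,
      HasDerivAt (fun s => h s i)
        ((-(((A t)ᵀ + (1 / lam) • E t).mulVec (h t))
          - (Cᵀ.mulVec (Y t) + (E t).mulVec (r t))) i) t)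
    (Abar Ebar : ℝ) (hAbar : 0 ≤ Abar) (hEbar : 0 ≤ Ebar)
    (hAb : ∀ t ∈ Icc (0:ℝ) T, frob (A t) ≤ Abar)
    (hEb : ∀ t ∈ Icc (0:ℝ) T, frob (E t) ≤ Ebar) :
    ∀ t ∈ Icc (0:ℝ) T,
      evnorm (h t) ≤
        Real.sqrt T * (d : ℝ) ^ 2 * frob C *
            Real.exp (Real.sqrt d * (Abar + Ebar / lam) * T) *
            Real.sqrt (∫ s in (0:ℝ)..T, evnorm (Y s) ^ 2)
        + Real.sqrt (d * T) * Ebar *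
            Real.exp (Real.sqrt d * (Abar + Ebar / lam) * T) *
            Real.sqrt (∫ s in (0:ℝ)..T, evnorm (r s) ^ 2) :=
  statement9_general d d' hd T hT lam hlam C A r Y hr hY E h hh0 hh Abar Ebar hAbar hEbar hAb hEb
end
end

section
/- Let x₀ ∈ ℝ^d, let u : [0,T] → ℝ^d be continuous and let x : [0,T] → ℝ^d be differentiable with x(0) = x₀ and x'(t) = A(t)x(t) + r(t) + u(t) for all t. Then the cost x₀ᵀQx₀ + ∫₀ᵀ ‖ζ(t) − Cx(t)‖² dt + λ ∫₀ᵀ ‖u(t)‖² dt equals S = ∫₀ᵀ (‖ζ(t)‖² − 2 r(t)ᵀ h(t) − (1/λ)‖h(t)‖²) dt − h(T)ᵀ E(T)⁻¹ h(T) if and only if u(t) = (1/λ)(E(t)x(t) + h(t)) for all t ∈ [0,T] and x(T) = −E(T)⁻¹ h(T). -/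
/-!
Completing the square along the Riccati flow. With `V(t, v) = vᵀE(t)v + 2h(t)ᵀv`, the Riccati
equation for `E` and the linear equation for `h` make, along any trajectory,
`d/dt V(t, x) = ‖ζ - Cx‖² + λ‖u‖² - (‖ζ‖² - 2rᵀh - ‖h‖²/λ) - λ‖u - (Ex + h)/λ‖²`.
Integrating over `[0, T]` (where `V(0, x₀) = x₀ᵀQx₀` since `h(0) = 0`) and completing the square
at `t = T` gives `cost - S = λ ∫₀ᵀ ‖u - (Ex + h)/λ‖² + wᵀE(T)w` with `w = x(T) + E(T)⁻¹h(T)`.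
Both terms are nonnegative, so the cost equals `S` exactly when both vanish.
-/

open Matrix Set intervalIntegral
open scoped Matrix

noncomputable section

section Algebra

variable {n m : Type*} [Fintype n] [Fintype m]

lemma evnorm_sq (v : n → ℝ) : evnorm v ^ 2 = v ⬝ᵥ v := by
  rw [evnorm, Real.sq_sqrt (Finset.sum_nonneg fun i _ => sq_nonneg _)]
  simp only [dotProduct, sq]

lemma evnorm_sq_eq_zero_iff {v : n → ℝ} : evnorm v ^ 2 = 0 ↔ v = 0 := by
  rw [evnorm_sq, dotProduct_self_eq_zero]

lemma Matrix.PosDef.dotProduct_mulVec_self_eq_zero_iff {M : Matrix n n ℝ} (hM : M.PosDef)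
    {v : n → ℝ} : v ⬝ᵥ M *ᵥ v = 0 ↔ v = 0 := by
  refine ⟨fun h0 => ?_, fun hv => by rw [hv, zero_dotProduct]⟩
  by_contra hv
  simpa [h0] using hM.dotProduct_mulVec_pos hv

lemma Matrix.IsSymm.dotProduct_mulVec_comm {R : Type*} [CommSemiring R] {M : Matrix n n R}
    (hM : M.IsSymm) (v w : n → R) : v ⬝ᵥ M *ᵥ w = w ⬝ᵥ M *ᵥ v := by
  conv_lhs => rw [← hM.eq]
  exact dotProduct_transpose_mulVec M v w

def riccatiForm (M : Matrix n n ℝ) (w v : n → ℝ) : ℝ :=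
  v ⬝ᵥ M *ᵥ v + 2 * (w ⬝ᵥ v)

lemma riccatiForm_add_dotProduct_inv_mulVec [DecidableEq n] {M : Matrix n n ℝ} (hM : M.IsSymm)
    (hdet : IsUnit M.det) (w v : n → ℝ) :
    riccatiForm M w v + w ⬝ᵥ M⁻¹ *ᵥ w = (v + M⁻¹ *ᵥ w) ⬝ᵥ M *ᵥ (v + M⁻¹ *ᵥ w) := by
  have hMinv : M *ᵥ (M⁻¹ *ᵥ w) = w := by
    rw [mulVec_mulVec, mul_nonsing_inv _ hdet, one_mulVec]
  simp only [riccatiForm, mulVec_add, dotProduct_add, add_dotProduct, hMinv,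
    hM.dotProduct_mulVec_comm (M⁻¹ *ᵥ w) v, dotProduct_comm _ w]
  ring

lemma riccati_complete_square {lam : ℝ} (hlam : lam ≠ 0) (C : Matrix m n ℝ)
    {A E : Matrix n n ℝ} (hE : E.IsSymm) (x h r u : n → ℝ) (ζ : m → ℝ) :
    (A *ᵥ x + r + u) ⬝ᵥ E *ᵥ x
        + x ⬝ᵥ ((Cᵀ * C - Aᵀ * E - E * A - (1 / lam) • (E * E)) *ᵥ x + E *ᵥ (A *ᵥ x + r + u))
        + 2 * ((-((Aᵀ + (1 / lam) • E) *ᵥ h) - (Cᵀ *ᵥ ζ + E *ᵥ r)) ⬝ᵥ x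
          + h ⬝ᵥ (A *ᵥ x + r + u))
      = evnorm (ζ - C *ᵥ x) ^ 2 + lam * evnorm u ^ 2
        - (evnorm ζ ^ 2 - 2 * (r ⬝ᵥ h) - 1 / lam * evnorm h ^ 2)
        - lam * evnorm (u - (1 / lam) • (E *ᵥ x + h)) ^ 2 := by
  rw [dotProduct_comm _ x]
  simp only [evnorm_sq, ← mulVec_mulVec, sub_mulVec, add_mulVec, smul_mulVec, mulVec_add,
    dotProduct_add, add_dotProduct, dotProduct_sub, sub_dotProduct, dotProduct_smul,
    smul_dotProduct, dotProduct_neg, dotProduct_transpose_mulVec, smul_eq_mul,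
    hE.dotProduct_mulVec_comm x, dotProduct_comm (E *ᵥ x),
    dotProduct_comm (C *ᵥ x), dotProduct_comm h r, dotProduct_comm h u]
  field_simp
  ring

end Algebra

@[fun_prop]
theorem continuous_evnorm {n : Type*} [Fintype n] : Continuous (evnorm : (n → ℝ) → ℝ) := by
  unfold evnorm
  fun_prop

section Calculus

variable {n : Type*} [Fintype n]

theorem HasDerivAt.dotProduct {𝕜 : Type*} [NontriviallyNormedField 𝕜] {x y : 𝕜 → n → 𝕜}
    {x' y' : n → 𝕜} {t : 𝕜} (hx : HasDerivAt x x' t) (hy : HasDerivAt y y' t) :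
    HasDerivAt (fun s => x s ⬝ᵥ y s) (x' ⬝ᵥ y t + x t ⬝ᵥ y') t := by
  unfold _root_.dotProduct
  rw [← Finset.sum_add_distrib]
  exact HasDerivAt.fun_sum fun i _ => (hasDerivAt_pi.1 hx i).mul (hasDerivAt_pi.1 hy i)

theorem HasDerivAt.matrix_mulVec {𝕜 : Type*} [NontriviallyNormedField 𝕜] {m : Type*} [Finite m]
    {E : 𝕜 → Matrix m n 𝕜} {E' : Matrix m n 𝕜} {y : 𝕜 → n → 𝕜} {y' : n → 𝕜} {t : 𝕜}
    (hE : ∀ i j, HasDerivAt (fun s => E s i j) (E' i j) t) (hy : HasDerivAt y y' t) :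
    HasDerivAt (fun s => E s *ᵥ y s) (E' *ᵥ y t + E t *ᵥ y') t :=
  hasDerivAt_pi.2 fun i => (hasDerivAt_pi.2 (hE i)).dotProduct hy

variable {X R : Type*} [TopologicalSpace X] [TopologicalSpace R] [NonUnitalNonAssocSemiring R]
  [ContinuousAdd R] [ContinuousMul R] {s : Set X}

@[fun_prop]
theorem ContinuousOn.dotProduct {v w : X → n → R} (hv : ContinuousOn v s)
    (hw : ContinuousOn w s) : ContinuousOn (fun t => v t ⬝ᵥ w t) s := by
  rw [continuousOn_iff_continuous_domRestrict] at *
  exact hv.dotProduct hw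

@[fun_prop]
theorem ContinuousOn.matrix_mulVec {m : Type*} {M : X → Matrix m n R} {v : X → n → R}
    (hM : ContinuousOn M s) (hv : ContinuousOn v s) : ContinuousOn (fun t => M t *ᵥ v t) s := by
  rw [continuousOn_iff_continuous_domRestrict] at *
  exact hM.matrix_mulVec hv

end Calculus

theorem continuousOn_of_forall_hasDerivAt_apply {m n : Type*} {E E' : ℝ → Matrix m n ℝ}
    {s : Set ℝ} (hE : ∀ t ∈ s, ∀ i j, HasDerivAt (fun s => E s i j) (E' t i j) t) :
    ContinuousOn E s :=
  continuousOn_pi.2 fun i => continuousOn_pi.2 fun j =>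
    HasDerivAt.continuousOn fun t ht => hE t ht i j

theorem intervalIntegral.integral_eq_zero_iff_of_continuousOn_nonneg {g : ℝ → ℝ} {a b : ℝ}
    (hab : a < b) (hg : ContinuousOn g (Icc a b)) (hnn : ∀ t ∈ Icc a b, 0 ≤ g t) :
    ∫ t in a..b, g t = 0 ↔ ∀ t ∈ Icc a b, g t = 0 := by
  refine ⟨fun h0 c hc => le_antisymm ?_ (hnn c hc), fun hg0 => ?_⟩
  · by_contra! hpos
    have := integral_lt_integral_of_continuousOn_of_le_of_exists_lt hab continuousOn_const hg
      (fun t ht => hnn t (Ioc_subset_Icc_self ht)) ⟨c, hc, hpos⟩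
    simp [h0] at this
  · rw [integral_congr (g := fun _ => 0) (by rwa [uIcc_of_le hab.le]), integral_zero]

section Riccati

variable {n m : Type*} [Fintype n] [Fintype m] {lam : ℝ} (C : Matrix m n ℝ)

theorem hasDerivAt_riccatiForm (hlam : lam ≠ 0) {A : Matrix n n ℝ} {E : ℝ → Matrix n n ℝ}
    {x h : ℝ → n → ℝ} {r u : n → ℝ} {ζ : m → ℝ} {t : ℝ}
    (hE : ∀ i j, HasDerivAt (fun s => E s i j)
      ((Cᵀ * C - Aᵀ * E t - E t * A - (1 / lam) • (E t * E t)) i j) t)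
    (hEsymm : (E t).IsSymm)
    (hh : HasDerivAt h (-((Aᵀ + (1 / lam) • E t) *ᵥ h t) - (Cᵀ *ᵥ ζ + E t *ᵥ r)) t)
    (hx : HasDerivAt x (A *ᵥ x t + r + u) t) :
    HasDerivAt (fun s => riccatiForm (E s) (h s) (x s))
      (evnorm (ζ - C *ᵥ x t) ^ 2 + lam * evnorm u ^ 2
        - (evnorm ζ ^ 2 - 2 * (r ⬝ᵥ h t) - 1 / lam * evnorm (h t) ^ 2)
        - lam * evnorm (u - (1 / lam) • (E t *ᵥ x t + h t)) ^ 2) t := by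
  rw [← riccati_complete_square hlam C hEsymm]
  exact (hx.dotProduct (.matrix_mulVec hE hx)).add ((hh.dotProduct hx).const_mul 2)

theorem integral_cost_sub_integral_value (hlam : lam ≠ 0) {a b : ℝ} (hab : a ≤ b)
    {A E : ℝ → Matrix n n ℝ} {x h r u : ℝ → n → ℝ} {ζ : ℝ → m → ℝ}
    (hE : ∀ t ∈ Icc a b, ∀ i j, HasDerivAt (fun s => E s i j)
      ((Cᵀ * C - (A t)ᵀ * E t - E t * A t - (1 / lam) • (E t * E t)) i j) t)
    (hEsymm : ∀ t ∈ Icc a b, (E t).IsSymm)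
    (hh : ∀ t ∈ Icc a b,
      HasDerivAt h (-(((A t)ᵀ + (1 / lam) • E t) *ᵥ h t) - (Cᵀ *ᵥ ζ t + E t *ᵥ r t)) t)
    (hx : ∀ t ∈ Icc a b, HasDerivAt x (A t *ᵥ x t + r t + u t) t)
    (hr : ContinuousOn r (Icc a b)) (hζ : ContinuousOn ζ (Icc a b))
    (hu : ContinuousOn u (Icc a b)) :
    (∫ t in a..b, evnorm (ζ t - C *ᵥ x t) ^ 2) + lam * (∫ t in a..b, evnorm (u t) ^ 2)
        - ∫ t in a..b, (evnorm (ζ t) ^ 2 - 2 * (r t ⬝ᵥ h t) - 1 / lam * evnorm (h t) ^ 2)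
      = lam * (∫ t in a..b, evnorm (u t - (1 / lam) • (E t *ᵥ x t + h t)) ^ 2)
        + (riccatiForm (E b) (h b) (x b) - riccatiForm (E a) (h a) (x a)) := by
  have cx : ContinuousOn x (Icc a b) := HasDerivAt.continuousOn hx
  have ch : ContinuousOn h (Icc a b) := HasDerivAt.continuousOn hh
  have cE : ContinuousOn E (Icc a b) := continuousOn_of_forall_hasDerivAt_apply hE
  have integrable : ∀ {f : ℝ → ℝ}, ContinuousOn f (Icc a b) →
      IntervalIntegrable f MeasureTheory.volume a b := fun hf => hf.intervalIntegrable_of_Icc hab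
  have i1 := integrable (f := fun t => evnorm (ζ t - C *ᵥ x t) ^ 2) (by fun_prop)
  have i2 := integrable (f := fun t => lam * evnorm (u t) ^ 2) (by fun_prop)
  have i3 := integrable (f := fun t =>
    evnorm (ζ t) ^ 2 - 2 * (r t ⬝ᵥ h t) - 1 / lam * evnorm (h t) ^ 2) (by fun_prop)
  have i4 := integrable
    (f := fun t => lam * evnorm (u t - (1 / lam) • (E t *ᵥ x t + h t)) ^ 2) (by fun_prop)
  have ftc := integral_eq_sub_of_hasDerivAt (fun t ht => hasDerivAt_riccatiForm C hlam
    (hE t (uIcc_of_le hab ▸ ht)) (hEsymm t (uIcc_of_le hab ▸ ht)) (hh t (uIcc_of_le hab ▸ ht))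
    (hx t (uIcc_of_le hab ▸ ht))) (((i1.add i2).sub i3).sub i4)
  rw [integral_sub ((i1.add i2).sub i3) i4, integral_sub (i1.add i2) i3, integral_add i1 i2,
    integral_const_mul, integral_const_mul] at ftc
  linarith

end Riccati

theorem statement14_general
    (d d' : ℕ) (T : ℝ) (hT : 0 < T) (lam : ℝ) (hlam : 0 < lam)
    (C : Matrix (Fin d') (Fin d) ℝ)
    (A : ℝ → Matrix (Fin d) (Fin d) ℝ)
    (r : ℝ → Fin d → ℝ) (ζ : ℝ → Fin d' → ℝ)
    (hr : ∀ i, ContinuousOn (fun t => r t i) (Icc 0 T))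
    (hζ : ∀ i, ContinuousOn (fun t => ζ t i) (Icc 0 T))
    (Q : Matrix (Fin d) (Fin d) ℝ)
    (E : ℝ → Matrix (Fin d) (Fin d) ℝ)
    (hE0 : E 0 = Q)
    (hE : ∀ t ∈ Icc (0:ℝ) T, ∀ i j,
      HasDerivAt (fun s => E s i j)
        ((Cᵀ * C - (A t)ᵀ * E t - E t * A t - (1 / lam) • (E t * E t)) i j) t)
    (hEsymm : ∀ t ∈ Icc (0:ℝ) T, (E t)ᵀ = E t)
    (hET : (E T).PosDef)
    (h : ℝ → Fin d → ℝ)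
    (hh0 : h 0 = 0)
    (hh : ∀ t ∈ Icc (0:ℝ) T, ∀ i,
      HasDerivAt (fun s => h s i)
        ((-(((A t)ᵀ + (1 / lam) • E t).mulVec (h t))
          - (Cᵀ.mulVec (ζ t) + (E t).mulVec (r t))) i) t)
    (x₀ : Fin d → ℝ) (u : ℝ → Fin d → ℝ)
    (hu : ∀ i, ContinuousOn (fun t => u t i) (Icc 0 T))
    (x : ℝ → Fin d → ℝ)
    (hx0 : x 0 = x₀)
    (hx : ∀ t ∈ Icc (0:ℝ) T, ∀ i,
      HasDerivAt (fun s => x s i) (((A t).mulVec (x t) + r t + u t) i) t) :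
    x₀ ⬝ᵥ Q.mulVec x₀
        + (∫ t in (0:ℝ)..T, evnorm (ζ t - C.mulVec (x t)) ^ 2)
        + lam * ∫ t in (0:ℝ)..T, evnorm (u t) ^ 2
      = (∫ t in (0:ℝ)..T,
          (evnorm (ζ t) ^ 2 - 2 * (r t ⬝ᵥ h t) - (1 / lam) * evnorm (h t) ^ 2))
        - h T ⬝ᵥ (E T)⁻¹.mulVec (h T)
    ↔ ((∀ t ∈ Icc (0:ℝ) T, u t = (1 / lam) • ((E t).mulVec (x t) + h t))
        ∧ x T = -(E T)⁻¹.mulVec (h T)) := by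
  have hx' : ∀ t ∈ Icc 0 T, HasDerivAt x _ t := fun t ht => hasDerivAt_pi.2 (hx t ht)
  have hh' : ∀ t ∈ Icc 0 T, HasDerivAt h _ t := fun t ht => hasDerivAt_pi.2 (hh t ht)
  have hcost := integral_cost_sub_integral_value C hlam.ne' hT.le hE hEsymm hh' hx'
    (continuousOn_pi.2 hr) (continuousOn_pi.2 hζ) (continuousOn_pi.2 hu)
  have hinit : riccatiForm (E 0) (h 0) (x 0) = x₀ ⬝ᵥ Q *ᵥ x₀ := by
    simp [riccatiForm, hE0, hh0, hx0]
  have hfinal := riccatiForm_add_dotProduct_inv_mulVec (hEsymm T ⟨hT.le, le_rfl⟩)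
    hET.det_pos.ne'.isUnit (h T) (x T)
  have hresidual : ContinuousOn (fun t => evnorm (u t - (1 / lam) • (E t *ᵥ x t + h t)) ^ 2)
      (Icc 0 T) := by
    have := continuousOn_of_forall_hasDerivAt_apply hE
    have := HasDerivAt.continuousOn hx'
    have := HasDerivAt.continuousOn hh'
    fun_prop
  set I := ∫ t in (0:ℝ)..T, evnorm (u t - (1 / lam) • (E t *ᵥ x t + h t)) ^ 2 with hI
  set w := x T + (E T)⁻¹ *ᵥ h T
  have hI_nonneg : 0 ≤ I := integral_nonneg hT.le fun _ _ => sq_nonneg _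
  have hw_nonneg : 0 ≤ w ⬝ᵥ E T *ᵥ w := by
    simpa using hET.posSemidef.dotProduct_mulVec_nonneg w
  refine Iff.trans (b := lam * I + w ⬝ᵥ E T *ᵥ w = 0)
    ⟨fun hS => by linarith, fun hgap => by linarith⟩ ?_
  rw [add_eq_zero_iff_of_nonneg (mul_nonneg hlam.le hI_nonneg) hw_nonneg, mul_eq_zero,
    or_iff_right hlam.ne', hI,
    integral_eq_zero_iff_of_continuousOn_nonneg hT hresidual fun _ _ => sq_nonneg _,
    hET.dotProduct_mulVec_self_eq_zero_iff]
  simp only [evnorm_sq_eq_zero_iff, sub_eq_zero, w, add_eq_zero_iff_eq_neg]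

/-- characterization of optimality. The cost of an admissible pair
`(x₀,u)` equals the closed-form value `S` if and only if `u = (1/λ)(Ex + h)` on `[0,T]`
and `x(T) = −E(T)⁻¹ h(T)`. -/
theorem statement14
    (d d' : ℕ) (hd : 1 ≤ d) (hd' : 1 ≤ d') (T : ℝ) (hT : 0 < T) (lam : ℝ) (hlam : 0 < lam)
    (C : Matrix (Fin d') (Fin d) ℝ)
    (A : ℝ → Matrix (Fin d) (Fin d) ℝ)
    (r : ℝ → Fin d → ℝ) (ζ : ℝ → Fin d' → ℝ)
    (hA : ∀ i j, ContinuousOn (fun t => A t i j) (Icc 0 T))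
    (hr : ∀ i, ContinuousOn (fun t => r t i) (Icc 0 T))
    (hζ : ∀ i, ContinuousOn (fun t => ζ t i) (Icc 0 T))
    (Q : Matrix (Fin d) (Fin d) ℝ) (hQ : Q.PosSemidef)
    (E : ℝ → Matrix (Fin d) (Fin d) ℝ)
    (hE0 : E 0 = Q)
    (hE : ∀ t ∈ Icc (0:ℝ) T, ∀ i j,
      HasDerivAt (fun s => E s i j)
        ((Cᵀ * C - (A t)ᵀ * E t - E t * A t - (1 / lam) • (E t * E t)) i j) t)
    (hEsymm : ∀ t ∈ Icc (0:ℝ) T, (E t)ᵀ = E t)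
    (hET : (E T).PosDef)
    (h : ℝ → Fin d → ℝ)
    (hh0 : h 0 = 0)
    (hh : ∀ t ∈ Icc (0:ℝ) T, ∀ i,
      HasDerivAt (fun s => h s i)
        ((-(((A t)ᵀ + (1 / lam) • E t).mulVec (h t))
          - (Cᵀ.mulVec (ζ t) + (E t).mulVec (r t))) i) t)
    (x₀ : Fin d → ℝ) (u : ℝ → Fin d → ℝ)
    (hu : ∀ i, ContinuousOn (fun t => u t i) (Icc 0 T))
    (x : ℝ → Fin d → ℝ)
    (hx0 : x 0 = x₀)
    (hx : ∀ t ∈ Icc (0:ℝ) T, ∀ i,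
      HasDerivAt (fun s => x s i) (((A t).mulVec (x t) + r t + u t) i) t) :
    x₀ ⬝ᵥ Q.mulVec x₀
        + (∫ t in (0:ℝ)..T, evnorm (ζ t - C.mulVec (x t)) ^ 2)
        + lam * ∫ t in (0:ℝ)..T, evnorm (u t) ^ 2
      = (∫ t in (0:ℝ)..T,
          (evnorm (ζ t) ^ 2 - 2 * (r t ⬝ᵥ h t) - (1 / lam) * evnorm (h t) ^ 2))
        - h T ⬝ᵥ (E T)⁻¹.mulVec (h T)
    ↔ ((∀ t ∈ Icc (0:ℝ) T, u t = (1 / lam) • ((E t).mulVec (x t) + h t))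
        ∧ x T = -(E T)⁻¹.mulVec (h T)) :=
  statement14_general d d' T hT lam hlam C A r ζ hr hζ Q E hE0 hE hEsymm hET h hh0 hh x₀ u hu x hx0
    hx
end
end
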